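/- The collection {C(n) = Hom_X(A^{⊗(n+2)}, A)} with structure maps γ and identity Id forms a non-symmetric operad, and π is a multiplication on this operad; hence the graded vector space CH*_Hopf(A,A) = ⊕ₙ C(n) with the induced brace operations x{x₁,…,xₙ} = Σ (±) γ(x; Id,…,x₁,…,xₙ,…,Id) is a brace algebra with multiplication π, i.e., π{π} = 0. -/

import Mathlib

open TensorProduct

noncomputable section ModuleAlgebraDeligne

universe u

variable (K A H : Type u)

/-- An `H`-module-algebra structure on `A`: an `H`-action by `K`-linear maps making `A`
an `H`-module, such that multiplication and unit of `A` are `H`-linear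
(the Sweedler sum `∑ (b₍₁₎a₁)(b₍₂₎a₂)` is expressed via `Coalgebra.comul`). -/
structure ModAlg [Field K] [Ring A] [Algebra K A] [Ring H] [Bialgebra K H] where
  act : H →ₗ[K] A →ₗ[K] A
  act_one : ∀ a : A, act 1 a = a
  act_mul : ∀ (b c : H) (a : A), act (b * c) a = act b (act c a)
  act_unit : ∀ b : H, act b (1 : A) = (Coalgebra.counit (R := K) b) • (1 : A)
  act_alg : ∀ (b : H) (a₁ a₂ : A),
    act b (a₁ * a₂) =
      LinearMap.mul' K A
        ((TensorProduct.homTensorHomMap (RingHom.id K) A A A A)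
          (TensorProduct.map act act (Coalgebra.comul (R := K) b)) (a₁ ⊗ₜ[K] a₂))

variable [Field K] [Ring A] [Algebra K A] [Ring H] [Bialgebra K H]

/-- The defining formula of the crossed product multiplication on `X = A ⊗ A ⊗ H`:
`(a₁ ⊗ a₁' ⊗ b¹)(a₂ ⊗ a₂' ⊗ b²) = ∑ a₁(b¹₍₁₎a₂) ⊗ (b¹₍₃₎a₂')a₁' ⊗ b¹₍₂₎b²`. -/
def XMulFormula (act : H →ₗ[K] A →ₗ[K] A)
    (mul : (A ⊗[K] (A ⊗[K] H)) →ₗ[K] (A ⊗[K] (A ⊗[K] H)) →ₗ[K] (A ⊗[K] (A ⊗[K] H))) :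
    Prop :=
  ∀ (a₁ a₁' : A) (b₁ : H) (a₂ a₂' : A) (b₂ : H),
    mul (a₁ ⊗ₜ[K] (a₁' ⊗ₜ[K] b₁)) (a₂ ⊗ₜ[K] (a₂' ⊗ₜ[K] b₂)) =
      TensorProduct.map
        (LinearMap.mulLeft K a₁ ∘ₗ act.flip a₂)
        ((TensorProduct.map (LinearMap.mulRight K a₁' ∘ₗ act.flip a₂')
            (LinearMap.mulRight K b₂)) ∘ₗ (TensorProduct.comm K H H).toLinearMap)
        ((LinearMap.lTensor H (Coalgebra.comul (R := K)) ∘ₗ Coalgebra.comul (R := K)) b₁)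

/-- Iterated tensor power `A^{⊗(n+1)}` (so `Tpow K A n` has `n+1` tensor factors),
bundled with its module structure. -/
def TpowAux : ℕ → Σ' (T : Type u) (_ : AddCommGroup T), Module K T
  | 0 => ⟨A, inferInstance, inferInstance⟩
  | n + 1 =>
    letI T := TpowAux n
    letI : AddCommGroup T.1 := T.2.1
    letI : Module K T.1 := T.2.2
    ⟨A ⊗[K] T.1, inferInstance, inferInstance⟩

/-- `Tpow K A n = A^{⊗(n+1)}`. -/
def Tpow (n : ℕ) : Type u := (TpowAux K A n).1

instance instTpowAuxACG (n : ℕ) : AddCommGroup (TpowAux K A n).1 := (TpowAux K A n).2.1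
instance instTpowAuxMod (n : ℕ) : Module K (TpowAux K A n).1 := (TpowAux K A n).2.2
instance (n : ℕ) : AddCommGroup (Tpow K A n) := (TpowAux K A n).2.1
instance (n : ℕ) : Module K (Tpow K A n) := (TpowAux K A n).2.2

/-- Cast between equal tensor powers (identity when `m = n`, junk `0` otherwise). -/
def tmap (m n : ℕ) : Tpow K A m →ₗ[K] Tpow K A n :=
  if h : m = n then by subst h; exact LinearMap.id else 0

/-- Left multiplication by an element of `A` on the first tensor factor. -/
def lmulL : ∀ n : ℕ, A →ₗ[K] Tpow K A n →ₗ[K] Tpow K A n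
  | 0 => LinearMap.mul K A
  | n + 1 =>
    (LinearMap.rTensorHom (R := K) (M := Tpow K A n) (N := A) (P := A)) ∘ₗ
      LinearMap.mul K A

/-- Right multiplication by an element of `A` on the last tensor factor. -/
def rmulL : ∀ n : ℕ, A →ₗ[K] Tpow K A n →ₗ[K] Tpow K A n
  | 0 => (LinearMap.mul K A).flip
  | n + 1 =>
    (LinearMap.lTensorHom (R := K) (M := A) (N := Tpow K A n) (P := Tpow K A n)) ∘ₗ
      rmulL n

/-- Componentwise action of `H^{⊗(n+1)}` on `A^{⊗(n+1)}` induced by an action of `H` on `A`. -/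
def tact (act : H →ₗ[K] A →ₗ[K] A) :
    ∀ n : ℕ, Tpow K H n →ₗ[K] Tpow K A n →ₗ[K] Tpow K A n
  | 0 => act
  | n + 1 =>
    (TensorProduct.homTensorHomMap (RingHom.id K) A (Tpow K A n) A (Tpow K A n)) ∘ₗ
      TensorProduct.map act (tact act n)

/-- Iterated comultiplication `Δⁿ : H → H^{⊗(n+1)}`. -/
def itComul : ∀ n : ℕ, H →ₗ[K] Tpow K H n
  | 0 => LinearMap.id
  | n + 1 => LinearMap.lTensor H (itComul n) ∘ₗ Coalgebra.comul (R := K)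

/-- The action of the pure tensor `a ⊗ a' ⊗ b ∈ X = A ⊗ A ⊗ H` on `A^{⊗(n+1)}`:
`(a ⊗ a' ⊗ b)(a₀ ⊗ ⋯ ⊗ aₙ) = ∑ a b₍₁₎a₀ ⊗ b₍₂₎a₁ ⊗ ⋯ ⊗ b₍ₙ₊₁₎aₙ a'`. -/
def xActP (act : H →ₗ[K] A →ₗ[K] A) (n : ℕ) (a a' : A) (b : H) :
    Tpow K A n →ₗ[K] Tpow K A n :=
  lmulL K A n a ∘ₗ rmulL K A n a' ∘ₗ tact K A H act n (itComul K H n b)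

/-- `X`-linearity (equivariance with respect to all pure tensors of `X = A ⊗ A ⊗ H`)
of a degree-`m` Hopf-Hochschild cochain `g : A^{⊗(m+2)} → A`. -/
def IsXLinear (act : H →ₗ[K] A →ₗ[K] A) (m : ℕ) (g : Tpow K A (m + 1) →ₗ[K] A) : Prop :=
  ∀ (a a' : A) (b : H) (t : Tpow K A (m + 1)),
    g (xActP K A H act (m + 1) a a' b t) = a * act b (g t) * a'

/-- Append an element of `A` as a new last tensor factor. -/
def appendA : ∀ n : ℕ, A →ₗ[K] Tpow K A n →ₗ[K] Tpow K A (n + 1)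
  | 0 => (TensorProduct.mk K A A).flip
  | n + 1 =>
    (LinearMap.lTensorHom (R := K) (M := A) (N := Tpow K A n) (P := Tpow K A (n + 1))) ∘ₗ
      appendA n

/-- The "inner part" `g(1 ⊗ - ⊗ 1) : A^{⊗n} → A` of a cochain `g : A^{⊗(n+2)} → A`. -/
def innerC {n : ℕ} (g : Tpow K A (n + 2) →ₗ[K] A) : Tpow K A n →ₗ[K] A :=
  g ∘ₗ TensorProduct.mk K A (Tpow K A (n + 1)) 1 ∘ₗ appendA K A n 1

/-- Consume the first `n+1` tensor factors of `A^{⊗(S+n+2)}` using a map `A^{⊗(n+1)} → A`,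
leaving the remaining `A^{⊗(S+1)}`. -/
def consume : ∀ n S : ℕ,
    (Tpow K A n →ₗ[K] A) →ₗ[K] (Tpow K A (S + n + 1) →ₗ[K] A ⊗[K] Tpow K A S)
  | 0, S => LinearMap.rTensorHom (R := K) (M := Tpow K A S) (N := A) (P := A)
  | n + 1, S =>
    (TensorProduct.lift.equiv (RingHom.id K) A (Tpow K A (S + n + 1)) (A ⊗[K] Tpow K A S)).toLinearMap ∘ₗ
      (LinearMap.llcomp K A (Tpow K A n →ₗ[K] A)
          (Tpow K A (S + n + 1) →ₗ[K] A ⊗[K] Tpow K A S) (consume n S)) ∘ₗ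
        TensorProduct.lcurry (RingHom.id K) A (Tpow K A n) A

/-- An operadic "entry": a Hopf-Hochschild cochain of degree `m`,
i.e. a linear map `A^{⊗(m+2)} → A`. -/
def Entry : Type u := Σ' m : ℕ, Tpow K A (m + 1) →ₗ[K] A

/-- Total degree of a list of entries. -/
def sumA : List (Entry K A) → ℕ
  | [] => 0
  | e :: l => sumA l + e.1

/-- The block-substitution map underlying the operad structure maps `γ`. -/
def gammaAux : ∀ l : List (Entry K A), Tpow K A (sumA K A l) →ₗ[K] Tpow K A l.length
  | [] => LinearMap.id
  | ⟨0, _⟩ :: _ => 0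
  | ⟨n + 1, g⟩ :: l =>
    LinearMap.lTensor A (gammaAux l) ∘ₗ consume K A n (sumA K A l) (innerC K A g)

/-- The operad structure map `γ(f; g₁, …, g_k)` of the Hopf-Hochschild cochain operad. -/
def gamma (l : List (Entry K A)) (f : Tpow K A (l.length + 1) →ₗ[K] A) :
    Tpow K A (sumA K A l + 1) →ₗ[K] A :=
  f ∘ₗ LinearMap.lTensor A (gammaAux K A l)

/-- `γ(f; g₁, …, g_k)` with degree bookkeeping by casts: `f` has degree `k`,
the result is regarded as a map on `Tpow K A M = A^{⊗(M+1)}`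
(the casts are identities in every intended use, where `l.length = k`
and `M = sumA l + 1`). -/
def gammaD (k : ℕ) (f : Tpow K A (k + 1) →ₗ[K] A) (l : List (Entry K A)) (M : ℕ) :
    Tpow K A M →ₗ[K] A :=
  gamma K A l (f ∘ₗ tmap K A (l.length + 1) (k + 1)) ∘ₗ tmap K A M (sumA K A l + 1)

/-- The identity cochain `Id ∈ C(1)`, `a₀ ⊗ a₁ ⊗ a₂ ↦ a₀a₁a₂`. -/
def idC : Tpow K A 2 →ₗ[K] A :=
  LinearMap.mul' K A ∘ₗ LinearMap.lTensor A (LinearMap.mul' K A)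

/-- `Id` as an entry. -/
def idE : Entry K A := ⟨1, idC K A⟩

/-- The multiplication cochain `π ∈ C(2)`, `a₀ ⊗ a₁ ⊗ a₂ ⊗ a₃ ↦ a₀a₁a₂a₃`. -/
def piC : Tpow K A 3 →ₗ[K] A :=
  LinearMap.mul' K A ∘ₗ
    LinearMap.lTensor A (LinearMap.mul' K A ∘ₗ LinearMap.lTensor A (LinearMap.mul' K A))

/-- The face map `∂ⱼ : A^{⊗(n+2)} → A^{⊗(n+1)}` of the bar complex. -/
def face : ∀ n j : ℕ, Tpow K A (n + 1) →ₗ[K] Tpow K A n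
  | n, 0 => TensorProduct.lift (lmulL K A n)
  | 0, _ + 1 => TensorProduct.lift (lmulL K A 0)
  | n + 1, j + 1 => LinearMap.lTensor A (face n j)

/-- The bar differential `d_n = ∑_{j=0}^n (−1)ʲ ∂ⱼ : A^{⊗(n+2)} → A^{⊗(n+1)}`. -/
def barDiff (n : ℕ) : Tpow K A (n + 1) →ₗ[K] Tpow K A n :=
  ∑ j ∈ Finset.range (n + 1), (-1 : K) ^ j • face K A n j

end ModuleAlgebraDeligne

/-!
On a pure tensor `a₀ ⊗ ⋯ ⊗ aₙ` the substitution map `gammaAux` is a list operation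
(`gammaAuxList`): an entry `g` of degree `m` consumes the next `m` factors `xs` and returns
`g (1 ⊗ xs ⊗ 1)`, and the last factor passes through. Pure tensors span, so the unit law,
associativity and `π{π} = 0` reduce to identities between such list operations; the last one is
associativity of the product of `A`.

`γ(f; g₁, …, g_k)` is `f ∘ (id ⊗ gammaAux)`, hence `X`-linear as soon as `gammaAux` commutes with
multiplication by `A` on the outer factors and with the diagonal action of `H`. The outer factors
are not touched by `gammaAux`. Each block `g (1 ⊗ - ⊗ 1)` is `H`-linear, because `g` is `X`-linear
and `b · 1 = ε(b) 1`, and cutting the iterated coproduct `Δⁿ b` into consecutive blocks is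
coassociativity.
-/

namespace TensorProduct

variable {K H₁ H₂ H₃ P P' Q Q' R : Type*} [CommSemiring K]
  [AddCommMonoid H₁] [Module K H₁] [AddCommMonoid H₂] [Module K H₂]
  [AddCommMonoid H₃] [Module K H₃] [AddCommMonoid P] [Module K P] [AddCommMonoid P'] [Module K P']
  [AddCommMonoid Q] [Module K Q] [AddCommMonoid Q'] [Module K Q'] [AddCommMonoid R] [Module K R]

lemma map_comp_map₂_of_comp_eq {F : H₁ →ₗ[K] P →ₗ[K] P} {F' : H₁ →ₗ[K] P' →ₗ[K] P'}
    {G : H₂ →ₗ[K] Q →ₗ[K] Q} {G' : H₂ →ₗ[K] Q' →ₗ[K] Q'} {φ : P →ₗ[K] P'} {ψ : Q →ₗ[K] Q'}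
    (hφ : ∀ h, φ ∘ₗ F h = F' h ∘ₗ φ) (hψ : ∀ h, ψ ∘ₗ G h = G' h ∘ₗ ψ) (z : H₁ ⊗[K] H₂) :
    TensorProduct.map φ ψ ∘ₗ TensorProduct.map₂ F G z =
      TensorProduct.map₂ F' G' z ∘ₗ TensorProduct.map φ ψ := by
  induction z using TensorProduct.induction_on with
  | zero => simp
  | tmul h h' => simp only [map₂_apply_tmul, ← TensorProduct.map_comp, hφ, hψ]
  | add x y hx hy => simp only [map_add, LinearMap.comp_add, LinearMap.add_comp, hx, hy]

lemma map₂_comp_map {M N : Type*} [AddCommMonoid M] [Module K M] [AddCommMonoid N] [Module K N]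
    (F : H₁ →ₗ[K] P →ₗ[K] P) (G : H₂ →ₗ[K] Q →ₗ[K] Q) (f : M →ₗ[K] H₁) (g : N →ₗ[K] H₂)
    (z : M ⊗[K] N) :
    TensorProduct.map₂ F G (TensorProduct.map f g z) = TensorProduct.map₂ (F ∘ₗ f) (G ∘ₗ g) z := by
  induction z using TensorProduct.induction_on with
  | zero => simp
  | tmul h h' => rfl
  | add x y hx hy => simp only [map_add, hx, hy]

lemma assoc_symm_comp_map_map₂ (F : H₁ →ₗ[K] P →ₗ[K] P) (G : H₂ →ₗ[K] Q →ₗ[K] Q)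
    (I : H₃ →ₗ[K] R →ₗ[K] R) (h : H₁) (z : H₂ ⊗[K] H₃) :
    (TensorProduct.assoc K P Q R).symm.toLinearMap ∘ₗ
        TensorProduct.map (F h) (TensorProduct.map₂ G I z) =
      TensorProduct.map₂ (TensorProduct.map₂ F G) I
          ((TensorProduct.assoc K H₁ H₂ H₃).symm (h ⊗ₜ z)) ∘ₗ
        (TensorProduct.assoc K P Q R).symm.toLinearMap := by
  induction z using TensorProduct.induction_on with
  | zero => simp
  | tmul u v => exact TensorProduct.ext_threefold' fun _ _ _ => rfl
  | add x y hx hy =>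
    simp only [map_add, tmul_add, TensorProduct.map_add_right, LinearMap.comp_add,
      LinearMap.add_comp, hx, hy]

end TensorProduct

noncomputable section HopfHochschildCochains

variable {K A : Type u} [Field K] [Ring A] [Algebra K A]

@[simp] lemma tmap_self (n : ℕ) : tmap K A n n = LinearMap.id := by simp [tmap]

variable (K) in
/-- The pure tensor `a₀ ⊗ ⋯ ⊗ aₙ ∈ Tpow K A n` of a list of length `n + 1`; `0` for lists of any
other length. -/
def tpList : (n : ℕ) → List A → Tpow K A n
  | 0, [a] => a
  | n + 1, a :: l => a ⊗ₜ[K] tpList n l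
  | _, _ => 0

@[simp] lemma tpList_succ_cons (n : ℕ) (a : A) (l : List A) :
    tpList K (n + 1) (a :: l) = a ⊗ₜ[K] tpList K n l := rfl

lemma tpList_of_length_ne {n : ℕ} {l : List A} (h : l.length ≠ n + 1) : tpList K n l = 0 := by
  induction n generalizing l with
  | zero => match l, h with
    | [], _ => rfl
    | _ :: _ :: _, _ => rfl
    | [_], h => simp at h
  | succ n ih => match l, h with
    | [], _ => rfl
    | a :: l, h => simp only [tpList_succ_cons, ih (l := l) (by simpa using h), tmul_zero]; rfl

lemma tpList_ext {n : ℕ} {M : Type*} [AddCommMonoid M] [Module K M] {f g : Tpow K A n →ₗ[K] M}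
    (h : ∀ l : List A, l.length = n + 1 → f (tpList K n l) = g (tpList K n l)) : f = g := by
  induction n with
  | zero => exact LinearMap.ext fun a => h [a] rfl
  | succ n ih =>
    refine TensorProduct.ext' fun a t => ?_
    have hslice : f ∘ₗ mk K A _ a = g ∘ₗ mk K A _ a :=
      ih fun l hl => h (a :: l) (by simp [hl])
    exact LinearMap.congr_fun hslice t

lemma appendA_tpList (n : ℕ) (x : A) (l : List A) :
    appendA K A n x (tpList K n l) = tpList K (n + 1) (l ++ [x]) := by
  by_cases hl : l.length = n + 1
  · induction n generalizing l with
    | zero => match l, hl with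
      | [a], _ => rfl
    | succ n ih => match l, hl with
      | a :: l, hl => exact congrArg (a ⊗ₜ[K] ·) (ih l (by simpa using hl))
  · rw [tpList_of_length_ne hl, tpList_of_length_ne (by simpa using hl), map_zero]

lemma rmulL_tpList_append_singleton (n : ℕ) (c x : A) (l : List A) :
    rmulL K A n c (tpList K n (l ++ [x])) = tpList K n (l ++ [x * c]) := by
  by_cases hl : l.length = n
  · induction n generalizing l with
    | zero => match l, hl with
      | [], _ => rfl
    | succ n ih => match l, hl with
      | a :: l, hl => exact congrArg (a ⊗ₜ[K] ·) (ih l (by simpa using hl))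
  · rw [tpList_of_length_ne (by simpa using hl), tpList_of_length_ne (by simpa using hl), map_zero]

lemma innerC_tpList {n : ℕ} (g : Tpow K A (n + 2) →ₗ[K] A) (l : List A) :
    innerC K A g (tpList K n l) = g (tpList K (n + 2) (1 :: (l ++ [1]))) := by
  show g (1 ⊗ₜ appendA K A n 1 (tpList K n l)) = _
  rw [appendA_tpList]
  rfl

/-- Splitting `A^{⊗(S+n+2)}` as `A^{⊗(n+1)} ⊗ A^{⊗(S+1)}`. -/
def tsplit (B : Type u) [Ring B] [Algebra K B] : ∀ n S : ℕ,
    Tpow K B (S + n + 1) →ₗ[K] Tpow K B n ⊗[K] Tpow K B S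
  | 0, _ => LinearMap.id
  | n + 1, S =>
    (TensorProduct.assoc K B (Tpow K B n) (Tpow K B S)).symm.toLinearMap ∘ₗ
      LinearMap.lTensor B (tsplit B n S)

lemma tsplit_tpList (n S : ℕ) (l : List A) :
    tsplit A n S (tpList K (S + n + 1) l) =
      tpList K n (l.take (n + 1)) ⊗ₜ[K] tpList K S (l.drop (n + 1)) := by
  induction n generalizing l with
  | zero => match l with
    | [] => exact (map_zero _).trans (zero_tmul _ _).symm
    | a :: l => rfl
  | succ n ih => match l with
    | [] => exact (map_zero _).trans (zero_tmul _ _).symm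
    | a :: l =>
      show (TensorProduct.assoc K A _ _).symm (a ⊗ₜ tsplit A n S (tpList K (S + n + 1) l)) = _
      rw [ih]
      rfl

lemma consume_eq_map_comp_tsplit (d S : ℕ) (c : Tpow K A d →ₗ[K] A) :
    consume K A d S c = TensorProduct.map c LinearMap.id ∘ₗ tsplit A d S := by
  induction d with
  | zero => rfl
  | succ d ih =>
    refine TensorProduct.ext' fun a t => ?_
    show consume K A d S (TensorProduct.lcurry (RingHom.id K) A (Tpow K A d) A c a) t =
      TensorProduct.map c LinearMap.id ((TensorProduct.assoc K A _ _).symm (a ⊗ₜ tsplit A d S t))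
    rw [ih]
    have hcurry : TensorProduct.map (TensorProduct.lcurry (RingHom.id K) A (Tpow K A d) A c a)
        (LinearMap.id : Tpow K A S →ₗ[K] Tpow K A S) =
        (TensorProduct.map c LinearMap.id ∘ₗ (TensorProduct.assoc K A _ _).symm.toLinearMap) ∘ₗ
          TensorProduct.mk K A _ a :=
      TensorProduct.ext' fun _ _ => rfl
    exact LinearMap.congr_fun hcurry (tsplit A d S t)

lemma consume_tpList (d S : ℕ) (c : Tpow K A d →ₗ[K] A) (l : List A) :
    consume K A d S c (tpList K (S + d + 1) l) =
      c (tpList K d (l.take (d + 1))) ⊗ₜ[K] tpList K S (l.drop (d + 1)) := by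
  rw [consume_eq_map_comp_tsplit, LinearMap.comp_apply, tsplit_tpList]
  rfl

@[simp] lemma sumA_nil : sumA K A [] = 0 := rfl

@[simp] lemma sumA_cons (e : Entry K A) (es : List (Entry K A)) :
    sumA K A (e :: es) = sumA K A es + e.1 := rfl

lemma sumA_append (es₁ es₂ : List (Entry K A)) :
    sumA K A (es₁ ++ es₂) = sumA K A es₁ + sumA K A es₂ := by
  induction es₁ with
  | nil => simp
  | cons e es ih => simp [ih]; omega

variable (K) in
/-- `gammaAux` on pure tensors: each entry `e` replaces the next `e.1` factors `xs` by
`e.2 (1 ⊗ xs ⊗ 1)`; the remaining factors pass through. This agrees with `gammaAux` only when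
all entries have degree `≥ 1`, since `gammaAux` sends an entry of degree `0` to `0`. -/
def gammaAuxList : List (Entry K A) → List A → List A
  | [], l => l
  | e :: es, l =>
    e.2 (tpList K (e.1 + 1) (1 :: (l.take e.1 ++ [1]))) :: gammaAuxList es (l.drop e.1)

@[simp] lemma gammaAuxList_nil (l : List A) : gammaAuxList K [] l = l := rfl

lemma gammaAuxList_cons (e : Entry K A) (es : List (Entry K A)) (l : List A) :
    gammaAuxList K (e :: es) l =
      e.2 (tpList K (e.1 + 1) (1 :: (l.take e.1 ++ [1]))) :: gammaAuxList K es (l.drop e.1) :=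
  rfl

lemma length_gammaAuxList (es : List (Entry K A)) (l : List A) :
    (gammaAuxList K es l).length = es.length + (l.length - sumA K A es) := by
  induction es generalizing l with
  | nil => simp
  | cons e es ih => simp [gammaAuxList_cons, ih]; omega

lemma gammaAuxList_append_right (es : List (Entry K A)) {l : List A} (r : List A)
    (hl : sumA K A es ≤ l.length) : gammaAuxList K es (l ++ r) = gammaAuxList K es l ++ r := by
  induction es generalizing l with
  | nil => rfl
  | cons e es ih =>
    simp only [sumA_cons] at hl
    rw [gammaAuxList_cons, gammaAuxList_cons, List.take_append_of_le_length (by omega),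
      List.drop_append_of_le_length (by omega), ih (by simp; omega), List.cons_append]

lemma gammaAuxList_append (es₁ es₂ : List (Entry K A)) (l : List A) :
    gammaAuxList K (es₁ ++ es₂) l =
      gammaAuxList K es₁ (l.take (sumA K A es₁)) ++ gammaAuxList K es₂ (l.drop (sumA K A es₁)) := by
  induction es₁ generalizing l with
  | nil => simp
  | cons e es ih =>
    rw [List.cons_append, gammaAuxList_cons, gammaAuxList_cons, ih, sumA_cons, List.take_take,
      List.drop_take, List.drop_drop, List.cons_append, Nat.min_eq_left (by omega),
      Nat.add_sub_cancel, Nat.add_comm (sumA K A es)]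

lemma gammaAux_tpList (es : List (Entry K A)) (hes : ∀ e ∈ es, 1 ≤ e.1) (l : List A) :
    gammaAux K A es (tpList K (sumA K A es) l) = tpList K es.length (gammaAuxList K es l) := by
  induction es generalizing l with
  | nil => rfl
  | cons e es ih =>
    obtain ⟨_ | d, g⟩ := e
    · exact absurd (hes _ List.mem_cons_self) (by simp)
    show LinearMap.lTensor A (gammaAux K A es)
        (consume K A d (sumA K A es) (innerC K A g) (tpList K (sumA K A es + d + 1) l)) = _
    rw [consume_tpList, LinearMap.lTensor_tmul, innerC_tpList,
      ih (fun e he => hes e (List.mem_cons_of_mem _ he))]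
    rfl

lemma gammaD_tpList {k M : ℕ} (f : Tpow K A (k + 1) →ₗ[K] A) {es : List (Entry K A)}
    (hk : es.length = k) (hM : M = sumA K A es + 1) (hes : ∀ e ∈ es, 1 ≤ e.1) (a : A)
    (l : List A) :
    gammaD K A k f es M (tpList K M (a :: l)) =
      f (tpList K (k + 1) (a :: gammaAuxList K es l)) := by
  subst hk hM
  simp only [gammaD, tmap_self, LinearMap.comp_id, gamma, tpList_succ_cons]
  exact congrArg (fun t => f (a ⊗ₜ t)) (gammaAux_tpList es hes l)

lemma idC_tpList (a b c : A) : idC K A (tpList K 2 [a, b, c]) = a * (b * c) := rfl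

lemma piC_tpList (a b c d : A) : piC K A (tpList K 3 [a, b, c, d]) = a * (b * (c * d)) := rfl

lemma sumA_replicate_idE (k : ℕ) : sumA K A (List.replicate k (idE K A)) = k := by
  induction k with
  | zero => rfl
  | succ k ih => rw [List.replicate_succ, sumA_cons, ih]; rfl

lemma gammaAuxList_idE_cons (es : List (Entry K A)) (x : A) (l : List A) :
    gammaAuxList K (idE K A :: es) (x :: l) = x :: gammaAuxList K es l := by
  show idC K A (tpList K 2 [1, x, 1]) :: gammaAuxList K es l = _
  rw [idC_tpList, one_mul, mul_one]

lemma gammaAuxList_replicate_idE {k : ℕ} {l : List A} (hk : k ≤ l.length) :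
    gammaAuxList K (List.replicate k (idE K A)) l = l := by
  induction k generalizing l with
  | zero => rfl
  | succ k ih => match l with
    | x :: l =>
      rw [List.replicate_succ, gammaAuxList_idE_cons, ih (by simpa using hk)]

theorem gammaD_replicate_idE (k : ℕ) (f : Tpow K A (k + 1) →ₗ[K] A) :
    gammaD K A k f (List.replicate k (idE K A)) (k + 1) = f := by
  refine tpList_ext fun l hl => ?_
  obtain ⟨a, l, rfl⟩ := List.exists_cons_of_length_eq_add_one hl
  rw [gammaD_tpList f List.length_replicate (by rw [sumA_replicate_idE])
      (fun e he => by rw [List.eq_of_mem_replicate he]; rfl),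
    gammaAuxList_replicate_idE (by simp at hl; omega)]

theorem gammaD_piC_brace_piC :
    gammaD K A 2 (piC K A) [⟨2, piC K A⟩, idE K A] 4 -
        gammaD K A 2 (piC K A) [idE K A, ⟨2, piC K A⟩] 4 = 0 := by
  refine sub_eq_zero.2 (tpList_ext fun l hl => ?_)
  match l, hl with
  | [a, x₁, x₂, x₃, x₄], _ =>
    have hdeg (e₁ e₂ : Entry K A) (h₁ : 1 ≤ e₁.1) (h₂ : 1 ≤ e₂.1) : ∀ e ∈ [e₁, e₂], 1 ≤ e.1 := by
      simp only [List.mem_cons, List.not_mem_nil, or_false]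
      rintro e (rfl | rfl) <;> assumption
    have hpi : 1 ≤ (⟨2, piC K A⟩ : Entry K A).1 := by norm_num
    have hid : 1 ≤ (idE K A).1 := le_rfl
    refine (gammaD_tpList _ rfl rfl (hdeg _ _ hpi hid) _ _).trans
      (Eq.trans ?_ (gammaD_tpList _ rfl rfl (hdeg _ _ hid hpi) _ _).symm)
    show piC K A (tpList K 3
        [a, piC K A (tpList K 3 [1, x₁, x₂, 1]), idC K A (tpList K 2 [1, x₃, 1]), x₄]) =
      piC K A (tpList K 3
        [a, idC K A (tpList K 2 [1, x₁, 1]), piC K A (tpList K 3 [1, x₂, x₃, 1]), x₄])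
    simp only [piC_tpList, idC_tpList, one_mul, mul_one, mul_assoc]

/-- The entry `γ(E; H₁, …, H_{E.1})` built from a pair `(E, [H₁, …, H_{E.1}])`. -/
def compEntry (p : Entry K A × List (Entry K A)) : Entry K A :=
  ⟨sumA K A p.2, gammaD K A p.1.1 p.1.2 p.2 (sumA K A p.2 + 1)⟩

lemma length_le_sumA {es : List (Entry K A)} (hes : ∀ e ∈ es, 1 ≤ e.1) :
    es.length ≤ sumA K A es := by
  induction es with
  | nil => rfl
  | cons e es ih =>
    have := hes e List.mem_cons_self
    have := ih fun e he => hes e (List.mem_cons_of_mem _ he)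
    simp; omega

lemma sumA_flatten_snd (pairs : List (Entry K A × List (Entry K A))) :
    sumA K A (pairs.map Prod.snd).flatten = sumA K A (pairs.map compEntry) := by
  induction pairs with
  | nil => rfl
  | cons p pairs ih =>
    rw [List.map_cons, List.flatten_cons, sumA_append, ih, List.map_cons, sumA_cons, add_comm]
    rfl

lemma length_flatten_snd {pairs : List (Entry K A × List (Entry K A))}
    (hpairs : ∀ p ∈ pairs, p.2.length = p.1.1) :
    ((pairs.map Prod.snd).flatten).length = sumA K A (pairs.map Prod.fst) := by
  induction pairs with
  | nil => rfl
  | cons p pairs ih =>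
    rw [List.map_cons, List.flatten_cons, List.length_append, List.map_cons, sumA_cons,
      ih fun q hq => hpairs q (List.mem_cons_of_mem _ hq), hpairs p List.mem_cons_self, add_comm]

lemma compEntry_apply_inner {E : Entry K A} {Hs : List (Entry K A)} (hlen : Hs.length = E.1)
    (hHs : ∀ e ∈ Hs, 1 ≤ e.1) {xs : List A} (hxs : xs.length = sumA K A Hs) :
    (compEntry (E, Hs)).2 (tpList K (sumA K A Hs + 1) (1 :: (xs ++ [1]))) =
      E.2 (tpList K (E.1 + 1) (1 :: (gammaAuxList K Hs xs ++ [1]))) := by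
  show gammaD K A E.1 E.2 Hs (sumA K A Hs + 1) _ = _
  rw [gammaD_tpList E.2 hlen rfl hHs, gammaAuxList_append_right Hs [1] hxs.ge]

lemma gammaAuxList_map_compEntry (pairs : List (Entry K A × List (Entry K A)))
    (hpairs : ∀ p ∈ pairs, p.2.length = p.1.1 ∧ ∀ e ∈ p.2, 1 ≤ e.1) {l : List A}
    (hl : sumA K A (pairs.map Prod.snd).flatten ≤ l.length) :
    gammaAuxList K (pairs.map compEntry) l =
      gammaAuxList K (pairs.map Prod.fst) (gammaAuxList K (pairs.map Prod.snd).flatten l) := by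
  induction pairs generalizing l with
  | nil => rfl
  | cons p pairs ih =>
    obtain ⟨E, Hs⟩ := p
    obtain ⟨hlen, hHs⟩ := hpairs _ List.mem_cons_self
    have hrest := fun q hq => hpairs q (List.mem_cons_of_mem _ hq)
    simp only [List.map_cons, List.flatten_cons, sumA_append] at hl ⊢
    have htake : (l.take (sumA K A Hs)).length = sumA K A Hs := by simp; omega
    have hblock : (gammaAuxList K Hs (l.take (sumA K A Hs))).length = E.1 := by
      rw [length_gammaAuxList, htake, hlen, Nat.sub_self, add_zero]
    rw [gammaAuxList_cons, gammaAuxList_append, gammaAuxList_cons, List.take_left' hblock,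
      List.drop_left' hblock, ← ih hrest (by simp; omega)]
    exact congrArg (· :: _) (compEntry_apply_inner hlen hHs htake)

theorem gammaD_assoc (k : ℕ) (f : Tpow K A (k + 1) →ₗ[K] A)
    (pairs : List (Entry K A × List (Entry K A))) (hk : pairs.length = k)
    (hpairs : ∀ p ∈ pairs, 1 ≤ p.1.1 ∧ p.2.length = p.1.1 ∧ ∀ e ∈ p.2, 1 ≤ e.1) :
    gammaD K A (sumA K A (pairs.map Prod.fst))
        (gammaD K A k f (pairs.map Prod.fst) (sumA K A (pairs.map Prod.fst) + 1))
        ((pairs.map Prod.snd).flatten) (sumA K A ((pairs.map Prod.snd).flatten) + 1) =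
      gammaD K A k f (pairs.map compEntry) (sumA K A ((pairs.map Prod.snd).flatten) + 1) := by
  have hfst : ∀ e ∈ pairs.map Prod.fst, 1 ≤ e.1 := by
    simp only [List.mem_map]
    rintro _ ⟨p, hp, rfl⟩
    exact (hpairs p hp).1
  have hflat : ∀ e ∈ (pairs.map Prod.snd).flatten, 1 ≤ e.1 := by
    simp only [List.mem_flatten, List.mem_map]
    rintro e ⟨_, ⟨p, hp, rfl⟩, he⟩
    exact (hpairs p hp).2.2 e he
  have hcomp : ∀ e ∈ pairs.map compEntry, 1 ≤ e.1 := by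
    simp only [List.mem_map]
    rintro _ ⟨p, hp, rfl⟩
    obtain ⟨hE, hlen, hHs⟩ := hpairs p hp
    exact hE.trans (hlen ▸ length_le_sumA hHs)
  refine tpList_ext fun l hl => ?_
  obtain ⟨a, l, rfl⟩ := List.exists_cons_of_length_eq_add_one hl
  rw [gammaD_tpList _ (length_flatten_snd fun p hp => (hpairs p hp).2.1) rfl hflat,
    gammaD_tpList _ (by rw [List.length_map, hk]) rfl hfst,
    gammaD_tpList _ (by rw [List.length_map, hk]) (by rw [sumA_flatten_snd]) hcomp,
    gammaAuxList_map_compEntry pairs (fun p hp => (hpairs p hp).2)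
      (by simp at hl; omega)]

section DiagonalAction

variable {H : Type u} [Ring H] [Bialgebra K H]

section

variable (act : H →ₗ[K] A →ₗ[K] A)

/-- The action `b ↦ tact (Δⁿ b)` of `H` on `A^{⊗(n+1)}`, i.e. of the elements `1 ⊗ 1 ⊗ b ∈ X`. -/
def diagAct (n : ℕ) : H →ₗ[K] Tpow K A n →ₗ[K] Tpow K A n :=
  tact K A H act n ∘ₗ itComul K H n

lemma diagAct_succ (n : ℕ) (b : H) :
    diagAct act (n + 1) b = TensorProduct.map₂ act (diagAct act n) (Coalgebra.comul (R := K) b) :=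
  map₂_comp_map act (tact K A H act n) LinearMap.id (itComul K H n) _

def IsEquivariant {n m : ℕ} (φ : Tpow K A n →ₗ[K] Tpow K A m) : Prop :=
  ∀ b : H, φ ∘ₗ diagAct act n b = diagAct act m b ∘ₗ φ

end

variable {act : H →ₗ[K] A →ₗ[K] A}

lemma IsEquivariant.comp {n m p : ℕ} {ψ : Tpow K A m →ₗ[K] Tpow K A p}
    {φ : Tpow K A n →ₗ[K] Tpow K A m} (hψ : IsEquivariant act ψ) (hφ : IsEquivariant act φ) :
    IsEquivariant act (ψ ∘ₗ φ) := fun b => by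
  rw [LinearMap.comp_assoc, hφ, ← LinearMap.comp_assoc, hψ, LinearMap.comp_assoc]

lemma IsEquivariant.lTensor {n m : ℕ} {φ : Tpow K A n →ₗ[K] Tpow K A m}
    (hφ : IsEquivariant act φ) :
    IsEquivariant act (n := n + 1) (m := m + 1) (LinearMap.lTensor A φ) := fun b => by
  rw [diagAct_succ, diagAct_succ]
  exact map_comp_map₂_of_comp_eq (φ := LinearMap.id) (fun _ => rfl) hφ _

lemma tsplit_comp_tact (n S : ℕ) (z : Tpow K H (S + n + 1)) :
    tsplit A n S ∘ₗ tact K A H act (S + n + 1) z =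
      TensorProduct.map₂ (tact K A H act n) (tact K A H act S) (tsplit H n S z) ∘ₗ
        tsplit A n S := by
  induction n with
  | zero => rfl
  | succ n ih =>
    -- as an identity of linear maps in `z`, so that `ext'` only needs pure tensors `h ⊗ w`
    have hlin : LinearMap.llcomp K _ _ _ (tsplit A (n + 1) S) ∘ₗ tact K A H act (S + (n + 1) + 1) =
        LinearMap.lcomp K _ (tsplit A (n + 1) S) ∘ₗ
          TensorProduct.map₂ (tact K A H act (n + 1)) (tact K A H act S) ∘ₗ tsplit H (n + 1) S := by
      refine TensorProduct.ext' fun h (w : Tpow K H (S + n + 1)) => ?_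
      show (TensorProduct.assoc K A _ _).symm.toLinearMap ∘ₗ LinearMap.lTensor A (tsplit A n S) ∘ₗ
          TensorProduct.map (act h) (tact K A H act (S + n + 1) w) = _
      rw [LinearMap.lTensor_comp_map, ih, ← LinearMap.map_comp_lTensor, ← LinearMap.comp_assoc,
        assoc_symm_comp_map_map₂]
      rfl
    exact LinearMap.congr_fun hlin z

lemma tsplit_comp_itComul (n S : ℕ) :
    tsplit H n S ∘ₗ itComul K H (S + n + 1) =
      TensorProduct.map (itComul K H n) (itComul K H S) ∘ₗ Coalgebra.comul (R := K) := by
  induction n with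
  | zero => exact LinearMap.id_comp _
  | succ n ih =>
    have hassoc : (TensorProduct.assoc K H (Tpow K H n) (Tpow K H S)).symm.toLinearMap ∘ₗ
        LinearMap.lTensor H (TensorProduct.map (itComul K H n) (itComul K H S)) =
        TensorProduct.map (LinearMap.lTensor H (itComul K H n)) (itComul K H S) ∘ₗ
          (TensorProduct.assoc K H H H).symm.toLinearMap :=
      (map_map_comp_assoc_symm_eq LinearMap.id _ _).symm
    show (TensorProduct.assoc K H (Tpow K H n) (Tpow K H S)).symm.toLinearMap ∘ₗ
        LinearMap.lTensor H (tsplit H n S) ∘ₗ LinearMap.lTensor H (itComul K H (S + n + 1)) ∘ₗ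
          Coalgebra.comul (R := K) =
      TensorProduct.map (LinearMap.lTensor H (itComul K H n) ∘ₗ Coalgebra.comul (R := K))
        (itComul K H S) ∘ₗ Coalgebra.comul (R := K)
    rw [← LinearMap.comp_assoc (Coalgebra.comul (R := K)), ← LinearMap.lTensor_comp, ih,
      LinearMap.lTensor_comp, ← LinearMap.map_comp_rTensor,
      LinearMap.comp_assoc (Coalgebra.comul (R := K)) (LinearMap.rTensor H Coalgebra.comul),
      ← Coalgebra.coassoc_symm,
      ← LinearMap.comp_assoc _ (TensorProduct.assoc K H H H).symm.toLinearMap, ← hassoc]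
    rfl

lemma tsplit_comp_diagAct (n S : ℕ) (b : H) :
    tsplit A n S ∘ₗ diagAct act (S + n + 1) b =
      TensorProduct.map₂ (diagAct act n) (diagAct act S) (Coalgebra.comul (R := K) b) ∘ₗ
        tsplit A n S := by
  rw [diagAct, LinearMap.comp_apply, tsplit_comp_tact, ← LinearMap.comp_apply (tsplit H n S),
    tsplit_comp_itComul, LinearMap.comp_apply, map₂_comp_map]
  rfl

lemma isEquivariant_consume {d : ℕ} (S : ℕ) {c : Tpow K A d →ₗ[K] A}
    (hc : IsEquivariant act (m := 0) c) :
    IsEquivariant act (n := S + d + 1) (m := S + 1) (consume K A d S c) := fun b => by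
  have hmap : TensorProduct.map c (LinearMap.id : Tpow K A S →ₗ[K] Tpow K A S) ∘ₗ
      TensorProduct.map₂ (diagAct act d) (diagAct act S) (Coalgebra.comul (R := K) b) =
      TensorProduct.map₂ act (diagAct act S) (Coalgebra.comul (R := K) b) ∘ₗ
        TensorProduct.map c LinearMap.id :=
    map_comp_map₂_of_comp_eq hc (fun _ => rfl) _
  refine LinearMap.ext fun t => ?_
  have hsplit : consume K A d S c (diagAct act (S + d + 1) b t) =
      TensorProduct.map c LinearMap.id (TensorProduct.map₂ (diagAct act d) (diagAct act S)
        (Coalgebra.comul (R := K) b) (tsplit A d S t)) := by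
    rw [consume_eq_map_comp_tsplit]
    exact congrArg _ (LinearMap.congr_fun (tsplit_comp_diagAct d S b) t)
  have hact : diagAct act (S + 1) b (consume K A d S c t) =
      TensorProduct.map₂ act (diagAct act S) (Coalgebra.comul (R := K) b)
        (TensorProduct.map c LinearMap.id (tsplit A d S t)) := by
    rw [diagAct_succ, consume_eq_map_comp_tsplit]
    rfl
  exact hsplit.trans ((LinearMap.congr_fun hmap _).trans hact.symm)

lemma map₂_comul_one_tmul (hunit : ∀ b : H, act b 1 = Coalgebra.counit (R := K) b • 1)
    {Q : Type*} [AddCommMonoid Q] [Module K Q] (G : H →ₗ[K] Q →ₗ[K] Q) (b : H) (y : Q) :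
    TensorProduct.map₂ act G (Coalgebra.comul (R := K) b) (1 ⊗ₜ y) = 1 ⊗ₜ G b y := by
  have key (z : H ⊗[K] H) : TensorProduct.map₂ act G z (1 ⊗ₜ y) =
      1 ⊗ₜ G (TensorProduct.lid K H (LinearMap.rTensor H (Coalgebra.counit (R := K)) z)) y := by
    induction z using TensorProduct.induction_on with
    | zero => simp
    | tmul h h' => simp [hunit, TensorProduct.smul_tmul]
    | add x y hx hy => simp only [map_add, LinearMap.add_apply, hx, hy, tmul_add]
  rw [key, Coalgebra.rTensor_counit_comul, TensorProduct.lid_tmul, one_smul]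

lemma map₂_comul_tmul_one (hunit : ∀ b : H, act b 1 = Coalgebra.counit (R := K) b • 1)
    {P : Type*} [AddCommMonoid P] [Module K P] (F : H →ₗ[K] P →ₗ[K] P) (b : H) (y : P) :
    TensorProduct.map₂ F act (Coalgebra.comul (R := K) b) (y ⊗ₜ 1) = F b y ⊗ₜ 1 := by
  have key (z : H ⊗[K] H) : TensorProduct.map₂ F act z (y ⊗ₜ 1) =
      F (TensorProduct.rid K H (LinearMap.lTensor H (Coalgebra.counit (R := K)) z)) y ⊗ₜ 1 := by
    induction z using TensorProduct.induction_on with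
    | zero => simp
    | tmul h h' => simp [hunit, TensorProduct.smul_tmul']
    | add x y hx hy => simp only [map_add, LinearMap.add_apply, hx, hy, add_tmul]
  rw [key, Coalgebra.lTensor_counit_comul, TensorProduct.rid_tmul, one_smul]

lemma isEquivariant_mk_one (hunit : ∀ b : H, act b 1 = Coalgebra.counit (R := K) b • 1)
    (n : ℕ) :
    IsEquivariant act (n := n) (m := n + 1) (TensorProduct.mk K A (Tpow K A n) 1) :=
  fun b => LinearMap.ext fun y => by
    show (1 : A) ⊗ₜ[K] diagAct act n b y = diagAct act (n + 1) b (1 ⊗ₜ y)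
    rw [diagAct_succ]
    exact (map₂_comul_one_tmul hunit _ b y).symm

lemma isEquivariant_appendA_one (hunit : ∀ b : H, act b 1 = Coalgebra.counit (R := K) b • 1)
    (n : ℕ) :
    IsEquivariant act (n := n) (m := n + 1) (appendA K A n 1) := by
  induction n with
  | zero =>
    refine fun b => LinearMap.ext fun y => ?_
    show diagAct act 0 b y ⊗ₜ[K] (1 : A) = diagAct act 1 b (y ⊗ₜ[K] (1 : A))
    rw [diagAct_succ]
    exact (map₂_comul_tmul_one hunit _ b y).symm
  | succ n ih => exact ih.lTensor

lemma lmulL_one (n : ℕ) : lmulL K A n 1 = LinearMap.id := by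
  have h : LinearMap.mul K A 1 = LinearMap.id := LinearMap.ext one_mul
  cases n with
  | zero => exact h
  | succ n =>
    show LinearMap.rTensor (Tpow K A n) (LinearMap.mul K A 1) = LinearMap.id
    rw [h, LinearMap.rTensor_id]

lemma rmulL_one (n : ℕ) : rmulL K A n 1 = LinearMap.id := by
  induction n with
  | zero => exact LinearMap.ext fun a : A => mul_one a
  | succ n ih =>
    show LinearMap.lTensor A (rmulL K A n 1) = LinearMap.id
    rw [ih, LinearMap.lTensor_id]

lemma isEquivariant_of_isXLinear {m : ℕ} {g : Tpow K A (m + 1) →ₗ[K] A}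
    (hg : IsXLinear K A H act m g) : IsEquivariant act (m := 0) g := fun b =>
  LinearMap.ext fun t => by
    show g (tact K A H act (m + 1) (itComul K H (m + 1) b) t) = act b (g t)
    simpa [xActP, lmulL_one, rmulL_one] using hg 1 1 b t

lemma isEquivariant_innerC_of_isXLinear
    (hunit : ∀ b : H, act b 1 = Coalgebra.counit (R := K) b • 1) {d : ℕ}
    {g : Tpow K A (d + 2) →ₗ[K] A} (hg : IsXLinear K A H act (d + 1) g) :
    IsEquivariant act (m := 0) (innerC K A g) :=
  (isEquivariant_of_isXLinear hg).comp
    ((isEquivariant_mk_one hunit (d + 1)).comp (isEquivariant_appendA_one hunit d))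

lemma isEquivariant_gammaAux (hunit : ∀ b : H, act b 1 = Coalgebra.counit (R := K) b • 1)
    (es : List (Entry K A)) (hes : ∀ e ∈ es, 1 ≤ e.1 ∧ IsXLinear K A H act e.1 e.2) :
    IsEquivariant act (gammaAux K A es) := by
  induction es with
  | nil => exact fun b => (LinearMap.id_comp _).trans (LinearMap.comp_id _).symm
  | cons e es ih =>
    obtain ⟨_ | d, g⟩ := e
    · exact absurd (hes _ List.mem_cons_self).1 (by simp)
    have hg := isEquivariant_innerC_of_isXLinear hunit (hes _ List.mem_cons_self).2
    exact (ih fun e he => hes e (List.mem_cons_of_mem _ he)).lTensor.comp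
      (isEquivariant_consume _ hg)

lemma gammaAux_comp_rmulL (es : List (Entry K A)) (hes : ∀ e ∈ es, 1 ≤ e.1) (c : A) :
    gammaAux K A es ∘ₗ rmulL K A (sumA K A es) c = rmulL K A es.length c ∘ₗ gammaAux K A es := by
  refine tpList_ext fun l hl => ?_
  obtain ⟨xs, x, rfl⟩ := (List.eq_nil_or_concat' l).resolve_left (by rintro rfl; simp at hl)
  have hxs : sumA K A es ≤ xs.length := by simp at hl; omega
  simp only [LinearMap.comp_apply]
  rw [rmulL_tpList_append_singleton, gammaAux_tpList es hes, gammaAux_tpList es hes,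
    gammaAuxList_append_right es _ hxs, gammaAuxList_append_right es _ hxs,
    rmulL_tpList_append_singleton]

lemma lTensor_comp_xActP {n m : ℕ} {φ : Tpow K A n →ₗ[K] Tpow K A m} (hφ : IsEquivariant act φ)
    (hφr : ∀ c : A, φ ∘ₗ rmulL K A n c = rmulL K A m c ∘ₗ φ) (a a' : A) (b : H) :
    LinearMap.lTensor A φ ∘ₗ xActP K A H act (n + 1) a a' b =
      xActP K A H act (m + 1) a a' b ∘ₗ LinearMap.lTensor A φ := by
  refine LinearMap.ext fun t => ?_
  have hl (x : Tpow K A (n + 1)) :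
      LinearMap.lTensor A φ (lmulL K A (n + 1) a x) =
        lmulL K A (m + 1) a (LinearMap.lTensor A φ x) :=
    LinearMap.congr_fun ((LinearMap.lTensor_comp_rTensor _ _ _).trans
      (LinearMap.rTensor_comp_lTensor _ _ _).symm) x
  have hr (x : Tpow K A (n + 1)) :
      LinearMap.lTensor A φ (rmulL K A (n + 1) a' x) =
        rmulL K A (m + 1) a' (LinearMap.lTensor A φ x) :=
    LinearMap.congr_fun ((LinearMap.lTensor_comp _ _ _).symm.trans
      ((congrArg _ (hφr a')).trans (LinearMap.lTensor_comp _ _ _))) x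
  exact (hl _).trans (congrArg _ ((hr _).trans
    (congrArg _ (LinearMap.congr_fun ((IsEquivariant.lTensor hφ) b) t))))

lemma isXLinear_comp_lTensor {n m : ℕ} {f : Tpow K A (m + 1) →ₗ[K] A}
    (hf : IsXLinear K A H act m f) {φ : Tpow K A n →ₗ[K] Tpow K A m} (hφ : IsEquivariant act φ)
    (hφr : ∀ c : A, φ ∘ₗ rmulL K A n c = rmulL K A m c ∘ₗ φ) :
    IsXLinear K A H act n (f ∘ₗ LinearMap.lTensor A φ) := fun a a' b t =>
  (congrArg f (LinearMap.congr_fun (lTensor_comp_xActP hφ hφr a a' b) t)).trans (hf a a' b _)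

theorem isXLinear_gammaD (hunit : ∀ b : H, act b 1 = Coalgebra.counit (R := K) b • 1) (k : ℕ)
    (f : Tpow K A (k + 1) →ₗ[K] A) (hf : IsXLinear K A H act k f) (es : List (Entry K A))
    (hk : es.length = k) (hes : ∀ e ∈ es, 1 ≤ e.1 ∧ IsXLinear K A H act e.1 e.2) :
    IsXLinear K A H act (sumA K A es) (gammaD K A k f es (sumA K A es + 1)) := by
  subst hk
  simp only [gammaD, tmap_self, LinearMap.comp_id, gamma]
  exact isXLinear_comp_lTensor hf (isEquivariant_gammaAux hunit es hes)
    (gammaAux_comp_rmulL es fun e he => (hes e he).1)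

end DiagonalAction

end HopfHochschildCochains

/-- The Hopf-Hochschild cochain modules `C(n) = Hom_X(A^{⊗(n+2)}, A)`
with structure maps `γ` and identity `Id` form a non-symmetric operad (unit law and
associativity), `π` is a multiplication on this operad, and hence the graded vector space
`CH*_Hopf(A, A)` with the induced brace operations is a brace algebra with multiplication
`π`, i.e. `π{π} = γ(π; π, Id) − γ(π; Id, π) = 0`. -/
theorem hopf_hochschild_operad_with_multiplication_and_brace
    {K A H : Type u} [Field K] [Ring A] [Algebra K A] [Ring H] [Bialgebra K H]
    (M : ModAlg K A H) :
    -- unit law of the operad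
    (∀ (k : ℕ), 1 ≤ k → ∀ f : Tpow K A (k + 1) →ₗ[K] A,
      gammaD K A k f (List.replicate k (idE K A)) (k + 1) = f) ∧
    -- associativity of the operad
    (∀ (k : ℕ), 1 ≤ k → ∀ f : Tpow K A (k + 1) →ₗ[K] A, IsXLinear K A H M.act k f →
      ∀ pairs : List (Entry K A × List (Entry K A)), pairs.length = k →
        (∀ p ∈ pairs, 1 ≤ p.1.1 ∧ p.2.length = p.1.1 ∧
          IsXLinear K A H M.act p.1.1 p.1.2 ∧
          ∀ e ∈ p.2, 1 ≤ e.1 ∧ IsXLinear K A H M.act e.1 e.2) →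
        gammaD K A (sumA K A (pairs.map Prod.fst))
            (gammaD K A k f (pairs.map Prod.fst) (sumA K A (pairs.map Prod.fst) + 1))
            ((pairs.map Prod.snd).flatten)
            (sumA K A ((pairs.map Prod.snd).flatten) + 1) =
          gammaD K A k f
            (pairs.map fun p =>
              (⟨sumA K A p.2, gammaD K A p.1.1 p.1.2 p.2 (sumA K A p.2 + 1)⟩ : Entry K A))
            (sumA K A ((pairs.map Prod.snd).flatten) + 1)) ∧
    -- γ preserves X-linearity (the operad is an operad of Hopf-Hochschild cochains)
    (∀ (k : ℕ), 1 ≤ k → ∀ f : Tpow K A (k + 1) →ₗ[K] A, IsXLinear K A H M.act k f →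
      ∀ l : List (Entry K A), l.length = k →
        (∀ e ∈ l, 1 ≤ e.1 ∧ IsXLinear K A H M.act e.1 e.2) →
        IsXLinear K A H M.act (sumA K A l) (gammaD K A k f l (sumA K A l + 1))) ∧
    -- π is a multiplication, i.e. π{π} = 0 in the induced brace algebra
    gammaD K A 2 (piC K A) [⟨2, piC K A⟩, idE K A] 4 -
        gammaD K A 2 (piC K A) [idE K A, ⟨2, piC K A⟩] 4 = 0 := by
  refine ⟨fun k _ f => gammaD_replicate_idE k f, ?_, ?_, gammaD_piC_brace_piC⟩
  · intro k _ f _ pairs hk hpairs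
    exact gammaD_assoc k f pairs hk fun p hp =>
      ⟨(hpairs p hp).1, (hpairs p hp).2.1, fun e he => ((hpairs p hp).2.2.2 e he).1⟩
  · intro k _ f hf l hl hes
    exact isXLinear_gammaD M.act_unit k f hf l hl hes
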